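/- arXiv:2506.07246 — 2 statements merged into one kernel-verified Lean document; each statement's English description precedes it below -/
import Mathlib

section
/- Let R₀ > 0, k ∈ ℝ with k ≠ 0, and let q, r : (−∞, −R₀] → ℂ be continuous with ∫_{−∞}^{−R₀} |q(x)| dx < ∞ and ∫_{−∞}^{−R₀} |r(x)| dx < ∞. Then there exist differentiable solutions φ, φ̄ : (−∞, −R₀] → ℂ² of the ZS system w₁' = −i·k·w₁ + q·w₂, w₂' = r·w₁ + i·k·w₂ such that φ(x)·e^{i·k·x} → (1, 0) and φ̄(x)·e^{−i·k·x} → (0, 1) as x → −∞. -/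
set_option autoImplicit false
set_option linter.unusedSectionVars false
set_option maxHeartbeats 2000000
open MeasureTheory Filter Set

namespace JostAux

variable {E : Type*} [NormedAddCommGroup E] [NormedSpace ℝ E] [CompleteSpace E]

lemma primitive_eq {f : ℝ → E} (hf : Integrable f) (x y : ℝ) :
    (∫ t in Iic y, f t) = (∫ t in Iic x, f t) + ∫ t in x..y, f t := by
  rw [← intervalIntegral.integral_Iic_sub_Iic hf.integrableOn hf.integrableOn]
  abel

lemma primitive_continuous {f : ℝ → E} (hf : Integrable f) :
    Continuous (fun y => ∫ t in Iic y, f t) := by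
  have : (fun y => ∫ t in Iic y, f t)
      = fun y => (∫ t in Iic 0, f t) + ∫ t in (0:ℝ)..y, f t :=
    funext fun y => primitive_eq hf 0 y
  rw [this]
  exact continuous_const.add
    (intervalIntegral.continuous_primitive (fun a b => hf.intervalIntegrable) 0)

lemma primitive_hasDerivWithinAt {f : ℝ → E} (hf : Integrable f) {s x : ℝ} (hx : x ≤ s)
    (hcont : ContinuousWithinAt f (Iic s) x) :
    HasDerivWithinAt (fun y => ∫ t in Iic y, f t) (f x) (Iic s) x := by
  have hrw : (fun y => ∫ t in Iic y, f t)
      = fun y => (∫ t in Iic x, f t) + ∫ t in x..y, f t :=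
    funext fun y => primitive_eq hf x y
  rw [hrw]
  have hmeas : StronglyMeasurableAtFilter f (nhds x) volume :=
    ⟨univ, univ_mem, hf.1.restrict⟩
  rcases eq_or_lt_of_le hx with rfl | hlt
  · refine HasDerivWithinAt.const_add _ ?_
    exact intervalIntegral.integral_hasDerivWithinAt_right hf.intervalIntegrable
      ⟨univ, univ_mem, hf.1.restrict⟩ hcont
  · refine HasDerivWithinAt.const_add _ ?_
    have hca : ContinuousAt f x := hcont.continuousAt (Iic_mem_nhds hlt)
    exact (intervalIntegral.integral_hasDerivAt_right hf.intervalIntegrable hmeas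
      hca).hasDerivWithinAt

lemma primitive_tendsto_zero {f : ℝ → E} (hf : Integrable f) :
    Tendsto (fun y => ∫ t in Iic y, f t) atBot (nhds 0) := by
  have h0 : (0 : E) = ∫ t : ℝ, (0 : E) := by simp
  have hrw : ∀ y, (∫ t in Iic y, f t) = ∫ t, (Iic y).indicator f t :=
    fun y => (integral_indicator measurableSet_Iic).symm
  simp only [hrw]
  rw [h0]
  refine tendsto_integral_filter_of_dominated_convergence (fun t => ‖f t‖) ?_ ?_ hf.norm ?_
  · exact Eventually.of_forall fun y => hf.1.indicator measurableSet_Iic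
  · exact Eventually.of_forall fun y => ae_of_all _ fun t => norm_indicator_le_norm_self f t
  · refine ae_of_all _ fun t => ?_
    have h : ∀ᶠ y in (atBot : Filter ℝ), (Iic y).indicator f t = 0 := by
      filter_upwards [eventually_lt_atBot t] with y hy
      exact indicator_of_notMem (by simpa using hy.not_ge) f
    exact Tendsto.congr' (h.mono fun y hy => hy.symm) tendsto_const_nhds

/-- Core existence lemma for the gauge-transformed system. -/
lemma exists_solution (s : ℝ) (a b : ℝ → ℂ)
    (hac : ContinuousOn a (Iic s)) (hbc : ContinuousOn b (Iic s))
    (hai : IntegrableOn a (Iic s)) (hbi : IntegrableOn b (Iic s)) (c₁ c₂ : ℂ) :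
    ∃ u₁ u₂ : ℝ → ℂ,
      (∀ x ∈ Iic s, HasDerivWithinAt u₁ (a x * u₂ x) (Iic s) x) ∧
      (∀ x ∈ Iic s, HasDerivWithinAt u₂ (b x * u₁ x) (Iic s) x) ∧
      Tendsto u₁ atBot (nhds c₁) ∧ Tendsto u₂ atBot (nhds c₂) := by
  classical
  set S := Iic s with hS_def
  -- the weight function
  set m : ℝ → ℝ := S.indicator (fun t => ‖a t‖ + ‖b t‖) with hm_def
  have hm_int : Integrable m :=
    (integrable_indicator_iff measurableSet_Iic).2 (hai.norm.add hbi.norm)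
  have hm0 : ∀ t, 0 ≤ m t := fun t => indicator_nonneg (fun t _ => add_nonneg (norm_nonneg _) (norm_nonneg _)) t
  have hma : ∀ t ∈ S, ‖a t‖ ≤ m t := fun t ht => by
    rw [hm_def, indicator_of_mem ht]; linarith [norm_nonneg (b t)]
  have hmb : ∀ t ∈ S, ‖b t‖ ≤ m t := fun t ht => by
    rw [hm_def, indicator_of_mem ht]; linarith [norm_nonneg (a t)]
  have hm_out : ∀ t, t ∉ S → m t = 0 := fun t ht => indicator_of_notMem ht _
  have hm_cwa : ∀ x ∈ S, ContinuousWithinAt m S x := fun x hx =>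
    ((hac.norm.add hbc.norm) x hx).congr
      (fun y hy => indicator_of_mem hy _) (indicator_of_mem hx _)
  set Q : ℝ → ℝ := fun x => ∫ t in Iic x, m t with hQ_def
  have hQ0 : ∀ x, 0 ≤ Q x := fun x =>
    setIntegral_nonneg measurableSet_Iic (fun t _ => hm0 t)
  set Qmax : ℝ := ∫ t, m t with hQmax_def
  have hQtop : ∀ x, Q x ≤ Qmax := fun x =>
    setIntegral_le_integral hm_int (ae_of_all _ hm0)
  have hQcont : Continuous Q := primitive_continuous hm_int
  have hQd : ∀ x ∈ S, HasDerivWithinAt Q (m x) S x := fun x hx =>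
    primitive_hasDerivWithinAt hm_int hx (hm_cwa x hx)
  -- integrability of the weighted density
  have hexp_cont : Continuous (fun t => Real.exp (2 * Q t)) :=
    Real.continuous_exp.comp (continuous_const.mul hQcont)
  have hw_int : Integrable (fun t => m t * Real.exp (2 * Q t)) := by
    have h1 : Integrable (fun t => Real.exp (2 * Q t) * m t) :=
      hm_int.bdd_mul (c := Real.exp (2 * Qmax)) hexp_cont.aestronglyMeasurable
        (ae_of_all _ fun t => by
          rw [Real.norm_eq_abs, abs_of_nonneg (Real.exp_pos _).le]
          exact Real.exp_le_exp.2 (by linarith [hQtop t]))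
    simpa [mul_comm] using h1
  -- the key integral identity
  have hKey : ∀ x ∈ S, (∫ t in Iic x, m t * Real.exp (2 * Q t))
      = Real.exp (2 * Q x) / 2 - 1 / 2 := by
    set W : ℝ → ℝ :=
      fun x => Real.exp (2 * Q x) / 2 - ∫ t in Iic x, m t * Real.exp (2 * Q t) with hW_def
    have hWd : ∀ x ∈ S, HasDerivWithinAt W 0 S x := by
      intro x hx
      have h1 : HasDerivWithinAt (fun y => Real.exp (2 * Q y) / 2)
          (m x * Real.exp (2 * Q x)) S x := by
        have h := (((hQd x hx).const_mul (2:ℝ)).exp.div_const 2)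
        rw [show m x * Real.exp (2 * Q x) = Real.exp (2 * Q x) * (2 * m x) / 2 by ring]
        exact h
      have h2 : HasDerivWithinAt (fun y => ∫ t in Iic y, m t * Real.exp (2 * Q t))
          (m x * Real.exp (2 * Q x)) S x :=
        primitive_hasDerivWithinAt hw_int hx
          ((hm_cwa x hx).mul hexp_cont.continuousWithinAt)
      have h3 := h1.sub h2
      simp only [sub_self] at h3
      exact h3
    have hconst : ∀ x ∈ S, ∀ y ∈ S, W y = W x := by
      intro x hx y hy
      have h := Convex.norm_image_sub_le_of_norm_hasDerivWithin_le
        (f' := fun _ => (0:ℝ)) (C := (0:ℝ)) (fun z hz => hWd z hz) (fun z _ => by simp)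
        (convex_Iic s) hx hy
      have h0 : ‖W y - W x‖ ≤ 0 := by simpa using h
      have := norm_le_zero_iff.1 h0
      linarith [sub_eq_zero.1 this]
    have hq0 : Tendsto Q atBot (nhds 0) := primitive_tendsto_zero hm_int
    have hWlim : Tendsto W atBot (nhds (1 / 2)) := by
      have h1 : Tendsto (fun x => Real.exp (2 * Q x) / 2) atBot (nhds (1 / 2)) := by
        have h2 : Tendsto (fun x => 2 * Q x) atBot (nhds (2 * 0)) := hq0.const_mul 2
        have h3 := (Real.continuous_exp.tendsto (2 * 0)).comp h2
        have h4 := h3.div_const 2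
        simpa using h4
      have h2 : Tendsto (fun x => ∫ t in Iic x, m t * Real.exp (2 * Q t)) atBot (nhds 0) :=
        primitive_tendsto_zero hw_int
      simpa using h1.sub h2
    intro x hx
    have hev : ∀ᶠ y in (atBot : Filter ℝ), W y = W x := by
      filter_upwards [eventually_le_atBot s] with y hy using hconst x hx y hy
    have hWx : Tendsto W atBot (nhds (W x)) :=
      Tendsto.congr' (hev.mono fun y hy => hy.symm) tendsto_const_nhds
    have hx2 : W x = 1 / 2 := tendsto_nhds_unique hWx hWlim
    simp only [hW_def] at hx2
    linarith
  -- integral bound with exponential weight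
  have hIb : ∀ (f : ℝ → ℂ) (C : ℝ), Integrable f →
      (∀ t, ‖f t‖ ≤ C * (m t * Real.exp (2 * Q t))) →
      ∀ x ∈ S, ‖∫ t in Iic x, f t‖ ≤ C * (Real.exp (2 * Q x) / 2 - 1 / 2) := by
    intro f C hf hbd x hx
    calc ‖∫ t in Iic x, f t‖ ≤ ∫ t in Iic x, ‖f t‖ := norm_integral_le_integral_norm _
    _ ≤ ∫ t in Iic x, C * (m t * Real.exp (2 * Q t)) :=
        setIntegral_mono hf.norm.integrableOn (hw_int.const_mul C).integrableOn hbd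
    _ = C * (Real.exp (2 * Q x) / 2 - 1 / 2) := by
        rw [MeasureTheory.integral_const_mul, hKey x hx]
  -- simple integral bound
  have hIb0 : ∀ (f : ℝ → ℂ) (C : ℝ), 0 ≤ C → Integrable f →
      (∀ t, ‖f t‖ ≤ C * m t) → ∀ x, ‖∫ t in Iic x, f t‖ ≤ C * Qmax := by
    intro f C hC hf hbd x
    calc ‖∫ t in Iic x, f t‖ ≤ ∫ t in Iic x, ‖f t‖ := norm_integral_le_integral_norm _
    _ ≤ ∫ t in Iic x, C * m t :=
        setIntegral_mono hf.norm.integrableOn (hm_int.const_mul C).integrableOn hbd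
    _ = C * Q x := by rw [MeasureTheory.integral_const_mul]
    _ ≤ C * Qmax := mul_le_mul_of_nonneg_left (hQtop x) hC
  -- domain reduction for indicator integrals
  have hdomC : ∀ (h : ℝ → ℂ) (x : ℝ),
      (∫ t in Iic x, S.indicator h t) = ∫ t in Iic (min x s), S.indicator h t := by
    intro h x
    rw [setIntegral_indicator measurableSet_Iic, setIntegral_indicator measurableSet_Iic]
    rw [Iic_inter_Iic, Iic_inter_Iic, min_assoc, min_self]
  -- the Banach space and the Picard operator
  let X := BoundedContinuousFunction ℝ (ℂ × ℂ)
  haveI : Nonempty X := ⟨0⟩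
  have hu_bd1 : ∀ (u : X) (t : ℝ), ‖(u t).1‖ ≤ ‖u‖ := fun u t =>
    le_trans (norm_fst_le _) (u.norm_coe_le_norm t)
  have hu_bd2 : ∀ (u : X) (t : ℝ), ‖(u t).2‖ ≤ ‖u‖ := fun u t =>
    le_trans (norm_snd_le _) (u.norm_coe_le_norm t)
  set g₁ : X → ℝ → ℂ := fun u => S.indicator (fun t => a t * (u t).2) with hg₁_def
  set g₂ : X → ℝ → ℂ := fun u => S.indicator (fun t => b t * (u t).1) with hg₂_def
  have hg₁i : ∀ u : X, Integrable (g₁ u) := by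
    intro u
    refine (integrable_indicator_iff measurableSet_Iic).2 ?_
    have h1 : IntegrableOn (fun t => (u t).2 * a t) S :=
      hai.bdd_mul ((continuous_snd.comp u.continuous).aestronglyMeasurable.restrict)
        (c := ‖u‖) (ae_of_all _ fun t => hu_bd2 u t)
    simpa [mul_comm] using h1
  have hg₂i : ∀ u : X, Integrable (g₂ u) := by
    intro u
    refine (integrable_indicator_iff measurableSet_Iic).2 ?_
    have h1 : IntegrableOn (fun t => (u t).1 * b t) S :=
      hbi.bdd_mul ((continuous_fst.comp u.continuous).aestronglyMeasurable.restrict)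
        (c := ‖u‖) (ae_of_all _ fun t => hu_bd1 u t)
    simpa [mul_comm] using h1
  have hg₁bd : ∀ (u : X) (t : ℝ), ‖g₁ u t‖ ≤ ‖u‖ * m t := by
    intro u t
    by_cases ht : t ∈ S
    · simp only [hg₁_def]
      rw [indicator_of_mem ht]
      have h1 : ‖a t * (u t).2‖ = ‖a t‖ * ‖(u t).2‖ := norm_mul _ _
      nlinarith [hma t ht, hu_bd2 u t, norm_nonneg (a t), norm_nonneg u,
        norm_nonneg ((u t).2), hm0 t]
    · simp only [hg₁_def]
      rw [indicator_of_notMem ht]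
      simpa using mul_nonneg (norm_nonneg u) (hm0 t)
  have hg₂bd : ∀ (u : X) (t : ℝ), ‖g₂ u t‖ ≤ ‖u‖ * m t := by
    intro u t
    by_cases ht : t ∈ S
    · simp only [hg₂_def]
      rw [indicator_of_mem ht]
      have h1 : ‖b t * (u t).1‖ = ‖b t‖ * ‖(u t).1‖ := norm_mul _ _
      nlinarith [hmb t ht, hu_bd1 u t, norm_nonneg (b t), norm_nonneg u,
        norm_nonneg ((u t).1), hm0 t]
    · simp only [hg₂_def]
      rw [indicator_of_notMem ht]
      simpa using mul_nonneg (norm_nonneg u) (hm0 t)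
  have hcontT : ∀ u : X, Continuous
      (fun x => ((c₁ + ∫ t in Iic x, g₁ u t : ℂ), (c₂ + ∫ t in Iic x, g₂ u t : ℂ))) := fun u =>
    (continuous_const.add (primitive_continuous (hg₁i u))).prodMk
      (continuous_const.add (primitive_continuous (hg₂i u)))
  set T : X → X := fun u => BoundedContinuousFunction.ofNormedAddCommGroup
      (fun x => ((c₁ + ∫ t in Iic x, g₁ u t : ℂ), (c₂ + ∫ t in Iic x, g₂ u t : ℂ)))
      (hcontT u) (max ‖c₁‖ ‖c₂‖ + ‖u‖ * Qmax) (by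
        intro x
        rw [Prod.norm_def]
        refine max_le ?_ ?_
        · calc ‖c₁ + ∫ t in Iic x, g₁ u t‖
              ≤ ‖c₁‖ + ‖∫ t in Iic x, g₁ u t‖ := norm_add_le _ _
          _ ≤ max ‖c₁‖ ‖c₂‖ + ‖u‖ * Qmax := add_le_add (le_max_left _ _)
              (hIb0 _ _ (norm_nonneg u) (hg₁i u) (hg₁bd u) x)
        · calc ‖c₂ + ∫ t in Iic x, g₂ u t‖
              ≤ ‖c₂‖ + ‖∫ t in Iic x, g₂ u t‖ := norm_add_le _ _
          _ ≤ max ‖c₁‖ ‖c₂‖ + ‖u‖ * Qmax := add_le_add (le_max_right _ _)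
              (hIb0 _ _ (norm_nonneg u) (hg₂i u) (hg₂bd u) x)) with hT_def
  have hT_apply : ∀ (u : X) (x : ℝ),
      T u x = ((c₁ + ∫ t in Iic x, g₁ u t : ℂ), (c₂ + ∫ t in Iic x, g₂ u t : ℂ)) :=
    fun u x => rfl
  -- the contraction estimate
  have claim : ∀ (n : ℕ) (u v : X) (x : ℝ), ‖T^[n] u x - T^[n] v x‖
      ≤ dist u v * ((1/2)^n * Real.exp (2 * Q (min x s))) := by
    intro n
    induction n with
    | zero =>
      intro u v x
      simp only [Function.iterate_zero, id_eq, pow_zero]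
      have h1 : ‖u x - v x‖ ≤ dist u v := by
        rw [← dist_eq_norm]; exact BoundedContinuousFunction.dist_coe_le_dist x
      have h2 : (1:ℝ) ≤ Real.exp (2 * Q (min x s)) :=
        Real.one_le_exp (by linarith [hQ0 (min x s)])
      nlinarith [dist_nonneg (x := u) (y := v)]
    | succ n ih =>
      intro u v x
      rw [Function.iterate_succ_apply', Function.iterate_succ_apply']
      set w := T^[n] u with hw
      set w' := T^[n] v with hw'
      set D := dist u v with hD
      have hD0 : 0 ≤ D := dist_nonneg
      set C : ℝ := D * (1/2)^n with hC
      have hC0 : 0 ≤ C := by positivity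
      have hexp_pos : ∀ t : ℝ, (0:ℝ) < Real.exp (2 * Q t) := fun t => Real.exp_pos _
      have hdiff1 : (fun t => g₁ w t - g₁ w' t)
          = S.indicator (fun t => a t * ((w t).2 - (w' t).2)) := by
        funext t
        by_cases ht : t ∈ S <;>
          simp [hg₁_def, indicator_of_mem, indicator_of_notMem, ht, mul_sub]
      have hdiff2 : (fun t => g₂ w t - g₂ w' t)
          = S.indicator (fun t => b t * ((w t).1 - (w' t).1)) := by
        funext t
        by_cases ht : t ∈ S <;>
          simp [hg₂_def, indicator_of_mem, indicator_of_notMem, ht, mul_sub]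
      have hbase : ∀ t : ℝ, t ∈ S → ‖w t - w' t‖ ≤ C * Real.exp (2 * Q t) := by
        intro t ht
        have h2 := ih u v t
        rw [min_eq_left ht] at h2
        calc ‖w t - w' t‖ ≤ D * ((1/2)^n * Real.exp (2 * Q t)) := h2
        _ = C * Real.exp (2 * Q t) := by rw [hC]; ring
      have hptw1 : ∀ t, ‖S.indicator (fun t => a t * ((w t).2 - (w' t).2)) t‖
          ≤ C * (m t * Real.exp (2 * Q t)) := by
        intro t
        by_cases ht : t ∈ S
        · rw [indicator_of_mem ht]
          have h1 : ‖(w t).2 - (w' t).2‖ ≤ ‖w t - w' t‖ := by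
            rw [← Prod.snd_sub]; exact norm_snd_le _
          have h6 : ‖(w t).2 - (w' t).2‖ ≤ C * Real.exp (2 * Q t) :=
            h1.trans (hbase t ht)
          calc ‖a t * ((w t).2 - (w' t).2)‖
              = ‖a t‖ * ‖(w t).2 - (w' t).2‖ := norm_mul _ _
          _ ≤ m t * (C * Real.exp (2 * Q t)) := by
              have := hma t ht
              nlinarith [norm_nonneg (a t), norm_nonneg ((w t).2 - (w' t).2), hm0 t,
                (hexp_pos t).le, mul_nonneg hC0 (hexp_pos t).le]
          _ = C * (m t * Real.exp (2 * Q t)) := by ring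
        · rw [indicator_of_notMem ht]
          simp [hm_out t ht]
      have hptw2 : ∀ t, ‖S.indicator (fun t => b t * ((w t).1 - (w' t).1)) t‖
          ≤ C * (m t * Real.exp (2 * Q t)) := by
        intro t
        by_cases ht : t ∈ S
        · rw [indicator_of_mem ht]
          have h1 : ‖(w t).1 - (w' t).1‖ ≤ ‖w t - w' t‖ := by
            rw [← Prod.fst_sub]; exact norm_fst_le _
          have h6 : ‖(w t).1 - (w' t).1‖ ≤ C * Real.exp (2 * Q t) :=
            h1.trans (hbase t ht)
          calc ‖b t * ((w t).1 - (w' t).1)‖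
              = ‖b t‖ * ‖(w t).1 - (w' t).1‖ := norm_mul _ _
          _ ≤ m t * (C * Real.exp (2 * Q t)) := by
              have := hmb t ht
              nlinarith [norm_nonneg (b t), norm_nonneg ((w t).1 - (w' t).1), hm0 t,
                (hexp_pos t).le, mul_nonneg hC0 (hexp_pos t).le]
          _ = C * (m t * Real.exp (2 * Q t)) := by ring
        · rw [indicator_of_notMem ht]
          simp [hm_out t ht]
      have hint1 : Integrable (S.indicator (fun t => a t * ((w t).2 - (w' t).2))) := by
        rw [← hdiff1]; exact (hg₁i w).sub (hg₁i w')
      have hint2 : Integrable (S.indicator (fun t => b t * ((w t).1 - (w' t).1))) := by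
        rw [← hdiff2]; exact (hg₂i w).sub (hg₂i w')
      have hx' : min x s ∈ S := mem_Iic.2 (min_le_right x s)
      have hfinal : ∀ e : ℝ, 0 < e → C * (e / 2 - 1 / 2) ≤ D * ((1/2)^(n+1) * e) := by
        intro e he
        rw [hC, pow_succ]
        nlinarith [mul_nonneg hD0 (pow_nonneg (by norm_num : (0:ℝ) ≤ 1/2) n)]
      have hcomp1 : ‖(∫ t in Iic x, g₁ w t) - ∫ t in Iic x, g₁ w' t‖
          ≤ D * ((1/2)^(n+1) * Real.exp (2 * Q (min x s))) := by
        rw [← integral_sub (hg₁i w).integrableOn (hg₁i w').integrableOn]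
        calc ‖∫ t in Iic x, (g₁ w t - g₁ w' t)‖
            = ‖∫ t in Iic (min x s), S.indicator (fun t => a t * ((w t).2 - (w' t).2)) t‖ := by
              simp only [hdiff1]; rw [hdomC _ x]
        _ ≤ C * (Real.exp (2 * Q (min x s)) / 2 - 1 / 2) :=
              hIb _ C hint1 hptw1 (min x s) hx'
        _ ≤ D * ((1/2)^(n+1) * Real.exp (2 * Q (min x s))) :=
              hfinal _ (hexp_pos _)
      have hcomp2 : ‖(∫ t in Iic x, g₂ w t) - ∫ t in Iic x, g₂ w' t‖
          ≤ D * ((1/2)^(n+1) * Real.exp (2 * Q (min x s))) := by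
        rw [← integral_sub (hg₂i w).integrableOn (hg₂i w').integrableOn]
        calc ‖∫ t in Iic x, (g₂ w t - g₂ w' t)‖
            = ‖∫ t in Iic (min x s), S.indicator (fun t => b t * ((w t).1 - (w' t).1)) t‖ := by
              simp only [hdiff2]; rw [hdomC _ x]
        _ ≤ C * (Real.exp (2 * Q (min x s)) / 2 - 1 / 2) :=
              hIb _ C hint2 hptw2 (min x s) hx'
        _ ≤ D * ((1/2)^(n+1) * Real.exp (2 * Q (min x s))) :=
              hfinal _ (hexp_pos _)
      have heq : T w x - T w' x
          = ((∫ t in Iic x, g₁ w t) - ∫ t in Iic x, g₁ w' t,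
             (∫ t in Iic x, g₂ w t) - ∫ t in Iic x, g₂ w' t) := by
        rw [hT_apply w x, hT_apply w' x]
        simp [Prod.mk_sub_mk, add_sub_add_left_eq_sub]
      rw [heq, Prod.norm_def]
      exact max_le hcomp1 hcomp2
  -- the contraction and its fixed point
  obtain ⟨n, hn⟩ : ∃ n : ℕ, ((1:ℝ)/2)^n < (Real.exp (2 * Qmax))⁻¹ :=
    exists_pow_lt_of_lt_one (inv_pos.2 (Real.exp_pos _)) (by norm_num)
  set Kr : ℝ := (1/2)^n * Real.exp (2 * Qmax) with hKr_def
  have hKr0 : 0 ≤ Kr := by positivity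
  have hKr1 : Kr < 1 := by
    have h := mul_lt_mul_of_pos_right hn (Real.exp_pos (2 * Qmax))
    rwa [inv_mul_cancel₀ (Real.exp_pos _).ne'] at h
  have hlip : LipschitzWith Kr.toNNReal (T^[n]) := by
    refine LipschitzWith.of_dist_le_mul fun u v => ?_
    rw [Real.coe_toNNReal _ hKr0]
    refine (BoundedContinuousFunction.dist_le (by positivity)).2 fun x => ?_
    rw [dist_eq_norm]
    calc ‖T^[n] u x - T^[n] v x‖
        ≤ dist u v * ((1/2)^n * Real.exp (2 * Q (min x s))) := claim n u v x
    _ ≤ Kr * dist u v := by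
        have h2 : Real.exp (2 * Q (min x s)) ≤ Real.exp (2 * Qmax) :=
          Real.exp_le_exp.2 (by linarith [hQtop (min x s)])
        have h3 : (0:ℝ) ≤ dist u v := dist_nonneg
        rw [hKr_def, mul_comm ((1/2:ℝ)^n * Real.exp (2 * Qmax)) (dist u v)]
        exact mul_le_mul_of_nonneg_left
          (mul_le_mul_of_nonneg_left h2 (pow_nonneg (by norm_num) n)) h3
  have hCW : ContractingWith Kr.toNNReal (T^[n]) := by
    constructor
    · rw [← Real.toNNReal_one]
      exact (Real.toNNReal_lt_toNNReal_iff one_pos).2 hKr1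
    · exact hlip
  set u : X := ContractingWith.fixedPoint (T^[n]) hCW with hu_def
  have hfixn : T^[n] u = u := hCW.fixedPoint_isFixedPt
  have hfix : T u = u := by
    have h1 : Function.IsFixedPt (T^[n]) (T u) := by
      show T^[n] (T u) = T u
      rw [← Function.iterate_succ_apply, Function.iterate_succ_apply', hfixn]
    exact (hCW.fixedPoint_unique h1).trans hu_def.symm
  have hval : ∀ x : ℝ,
      u x = ((c₁ + ∫ t in Iic x, g₁ u t : ℂ), (c₂ + ∫ t in Iic x, g₂ u t : ℂ)) := by
    intro x
    conv_lhs => rw [← hfix]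
    exact hT_apply u x
  have hfun1 : (fun y => (u y).1) = fun y => c₁ + ∫ t in Iic y, g₁ u t :=
    funext fun y => by rw [hval y]
  have hfun2 : (fun y => (u y).2) = fun y => c₂ + ∫ t in Iic y, g₂ u t :=
    funext fun y => by rw [hval y]
  refine ⟨fun x => (u x).1, fun x => (u x).2, ?_, ?_, ?_, ?_⟩
  · intro x hx
    have hcwa : ContinuousWithinAt (g₁ u) S x :=
      ((hac.mul (continuous_snd.comp u.continuous).continuousOn) x hx).congr
        (fun y hy => indicator_of_mem hy _) (indicator_of_mem hx _)
    have hder := (primitive_hasDerivWithinAt (hg₁i u) hx hcwa).const_add c₁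
    rw [hfun1]
    simpa [hg₁_def, indicator_of_mem hx] using hder
  · intro x hx
    have hcwa : ContinuousWithinAt (g₂ u) S x :=
      ((hbc.mul (continuous_fst.comp u.continuous).continuousOn) x hx).congr
        (fun y hy => indicator_of_mem hy _) (indicator_of_mem hx _)
    have hder := (primitive_hasDerivWithinAt (hg₂i u) hx hcwa).const_add c₂
    rw [hfun2]
    simpa [hg₂_def, indicator_of_mem hx] using hder
  · rw [hfun1]
    have h := (primitive_tendsto_zero (hg₁i u)).const_add c₁
    simpa using h
  · rw [hfun2]
    have h := (primitive_tendsto_zero (hg₂i u)).const_add c₂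
    simpa using h


end JostAux

open JostAux in
/-- Existence of the Jost solutions `φ, φ̄` at `−∞` for the ZS
system with continuous, absolutely integrable potentials on `(−∞, −R₀]`. -/
theorem jost_solutions_exist_at_minus_infty
    (R₀ : ℝ) (hR₀ : 0 < R₀) (k : ℝ) (hk : k ≠ 0)
    (q r : ℝ → ℂ)
    (hqc : ContinuousOn q (Set.Iic (-R₀))) (hrc : ContinuousOn r (Set.Iic (-R₀)))
    (hqi : IntegrableOn q (Set.Iic (-R₀))) (hri : IntegrableOn r (Set.Iic (-R₀))) :
    ∃ φ₁ φ₂ φb₁ φb₂ : ℝ → ℂ,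
      (∀ x ∈ Set.Iic (-R₀), HasDerivWithinAt φ₁
        (-Complex.I * (k : ℂ) * φ₁ x + q x * φ₂ x) (Set.Iic (-R₀)) x) ∧
      (∀ x ∈ Set.Iic (-R₀), HasDerivWithinAt φ₂
        (r x * φ₁ x + Complex.I * (k : ℂ) * φ₂ x) (Set.Iic (-R₀)) x) ∧
      (∀ x ∈ Set.Iic (-R₀), HasDerivWithinAt φb₁
        (-Complex.I * (k : ℂ) * φb₁ x + q x * φb₂ x) (Set.Iic (-R₀)) x) ∧
      (∀ x ∈ Set.Iic (-R₀), HasDerivWithinAt φb₂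
        (r x * φb₁ x + Complex.I * (k : ℂ) * φb₂ x) (Set.Iic (-R₀)) x) ∧
      Tendsto (fun x : ℝ => φ₁ x * Complex.exp (Complex.I * (k : ℂ) * (x : ℂ)))
        atBot (nhds 1) ∧
      Tendsto (fun x : ℝ => φ₂ x * Complex.exp (Complex.I * (k : ℂ) * (x : ℂ)))
        atBot (nhds 0) ∧
      Tendsto (fun x : ℝ => φb₁ x * Complex.exp (-Complex.I * (k : ℂ) * (x : ℂ)))
        atBot (nhds 0) ∧
      Tendsto (fun x : ℝ => φb₂ x * Complex.exp (-Complex.I * (k : ℂ) * (x : ℂ)))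
        atBot (nhds 1) := by
  -- basic facts about the oscillatory exponentials
  have hEcont : ∀ c : ℂ, Continuous (fun x : ℝ => Complex.exp (c * (x:ℂ))) := fun c =>
    Complex.continuous_exp.comp (continuous_const.mul Complex.continuous_ofReal)
  have hEnorm : ∀ (c : ℂ), c.re = 0 → ∀ x : ℝ, ‖Complex.exp (c * (x:ℂ))‖ = 1 := by
    intro c hc x
    rw [Complex.norm_exp]
    have h0 : (c * (x:ℂ)).re = 0 := by simp [Complex.mul_re, hc]
    rw [h0, Real.exp_zero]
  have hde : ∀ (c : ℂ) (x : ℝ),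
      HasDerivAt (fun y : ℝ => Complex.exp (c * (y:ℂ))) (c * Complex.exp (c * (x:ℂ))) x := by
    intro c x
    have h1 : HasDerivAt (fun z : ℂ => Complex.exp (c * z))
        (Complex.exp (c * (x:ℂ)) * (c * 1)) (x:ℂ) :=
      ((hasDerivAt_id ((x:ℝ):ℂ)).const_mul c).cexp
    have h2 := h1.comp_ofReal
    simpa [mul_comm] using h2
  have hre1 : (Complex.I * (k:ℂ)).re = 0 := by simp
  have hre2 : (-(Complex.I * (k:ℂ))).re = 0 := by simp
  have hre3 : ((2:ℂ) * (Complex.I * (k:ℂ))).re = 0 := by simp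
  have hre4 : (-((2:ℂ) * (Complex.I * (k:ℂ)))).re = 0 := by simp
  have hre5 : (-Complex.I * (k:ℂ)).re = 0 := by simp
  -- the gauge-transformed coefficients
  set a : ℝ → ℂ := fun x => Complex.exp (((2:ℂ) * (Complex.I * (k:ℂ))) * (x:ℂ)) * q x with ha_def
  set b : ℝ → ℂ := fun x => Complex.exp ((-((2:ℂ) * (Complex.I * (k:ℂ)))) * (x:ℂ)) * r x with hb_def
  have hac : ContinuousOn a (Set.Iic (-R₀)) := (hEcont _).continuousOn.mul hqc
  have hbc : ContinuousOn b (Set.Iic (-R₀)) := (hEcont _).continuousOn.mul hrc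
  have hai : IntegrableOn a (Set.Iic (-R₀)) :=
    hqi.bdd_mul ((hEcont _).aestronglyMeasurable.restrict)
      (c := 1) (ae_of_all _ fun t => le_of_eq (hEnorm _ hre3 t))
  have hbi : IntegrableOn b (Set.Iic (-R₀)) :=
    hri.bdd_mul ((hEcont _).aestronglyMeasurable.restrict)
      (c := 1) (ae_of_all _ fun t => le_of_eq (hEnorm _ hre4 t))
  obtain ⟨u₁, u₂, hu₁, hu₂, hu₁lim, hu₂lim⟩ :=
    exists_solution (-R₀) a b hac hbc hai hbi 1 0
  obtain ⟨v₁, v₂, hv₁, hv₂, hv₁lim, hv₂lim⟩ :=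
    exists_solution (-R₀) a b hac hbc hai hbi 0 1
  refine ⟨fun x => u₁ x * Complex.exp ((-(Complex.I * (k:ℂ))) * (x:ℂ)),
    fun x => u₂ x * Complex.exp ((Complex.I * (k:ℂ)) * (x:ℂ)),
    fun x => v₁ x * Complex.exp ((-(Complex.I * (k:ℂ))) * (x:ℂ)),
    fun x => v₂ x * Complex.exp ((Complex.I * (k:ℂ)) * (x:ℂ)),
    ?_, ?_, ?_, ?_, ?_, ?_, ?_, ?_⟩
  · intro x hx
    have hder := (hu₁ x hx).mul (hde (-(Complex.I * (k:ℂ))) x).hasDerivWithinAt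
    have hexpA : Complex.exp (((2:ℂ) * (Complex.I * (k:ℂ))) * (x:ℂ))
        * Complex.exp ((-(Complex.I * (k:ℂ))) * (x:ℂ))
        = Complex.exp ((Complex.I * (k:ℂ)) * (x:ℂ)) := by
      rw [← Complex.exp_add]; congr 1; ring
    have hD : a x * u₂ x * Complex.exp ((-(Complex.I * (k:ℂ))) * (x:ℂ))
        + u₁ x * (-(Complex.I * (k:ℂ)) * Complex.exp ((-(Complex.I * (k:ℂ))) * (x:ℂ)))
        = -Complex.I * (k:ℂ) * (u₁ x * Complex.exp ((-(Complex.I * (k:ℂ))) * (x:ℂ)))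
          + q x * (u₂ x * Complex.exp ((Complex.I * (k:ℂ)) * (x:ℂ))) := by
      rw [ha_def]
      linear_combination (q x * u₂ x) * hexpA
    exact hD ▸ hder
  · intro x hx
    have hder := (hu₂ x hx).mul (hde (Complex.I * (k:ℂ)) x).hasDerivWithinAt
    have hexpB : Complex.exp ((-((2:ℂ) * (Complex.I * (k:ℂ)))) * (x:ℂ))
        * Complex.exp ((Complex.I * (k:ℂ)) * (x:ℂ))
        = Complex.exp ((-(Complex.I * (k:ℂ))) * (x:ℂ)) := by
      rw [← Complex.exp_add]; congr 1; ring
    have hD : b x * u₁ x * Complex.exp ((Complex.I * (k:ℂ)) * (x:ℂ))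
        + u₂ x * (Complex.I * (k:ℂ) * Complex.exp ((Complex.I * (k:ℂ)) * (x:ℂ)))
        = r x * (u₁ x * Complex.exp ((-(Complex.I * (k:ℂ))) * (x:ℂ)))
          + Complex.I * (k:ℂ) * (u₂ x * Complex.exp ((Complex.I * (k:ℂ)) * (x:ℂ))) := by
      rw [hb_def]
      linear_combination (r x * u₁ x) * hexpB
    exact hD ▸ hder
  · intro x hx
    have hder := (hv₁ x hx).mul (hde (-(Complex.I * (k:ℂ))) x).hasDerivWithinAt
    have hexpA : Complex.exp (((2:ℂ) * (Complex.I * (k:ℂ))) * (x:ℂ))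
        * Complex.exp ((-(Complex.I * (k:ℂ))) * (x:ℂ))
        = Complex.exp ((Complex.I * (k:ℂ)) * (x:ℂ)) := by
      rw [← Complex.exp_add]; congr 1; ring
    have hD : a x * v₂ x * Complex.exp ((-(Complex.I * (k:ℂ))) * (x:ℂ))
        + v₁ x * (-(Complex.I * (k:ℂ)) * Complex.exp ((-(Complex.I * (k:ℂ))) * (x:ℂ)))
        = -Complex.I * (k:ℂ) * (v₁ x * Complex.exp ((-(Complex.I * (k:ℂ))) * (x:ℂ)))
          + q x * (v₂ x * Complex.exp ((Complex.I * (k:ℂ)) * (x:ℂ))) := by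
      rw [ha_def]
      linear_combination (q x * v₂ x) * hexpA
    exact hD ▸ hder
  · intro x hx
    have hder := (hv₂ x hx).mul (hde (Complex.I * (k:ℂ)) x).hasDerivWithinAt
    have hexpB : Complex.exp ((-((2:ℂ) * (Complex.I * (k:ℂ)))) * (x:ℂ))
        * Complex.exp ((Complex.I * (k:ℂ)) * (x:ℂ))
        = Complex.exp ((-(Complex.I * (k:ℂ))) * (x:ℂ)) := by
      rw [← Complex.exp_add]; congr 1; ring
    have hD : b x * v₁ x * Complex.exp ((Complex.I * (k:ℂ)) * (x:ℂ))
        + v₂ x * (Complex.I * (k:ℂ) * Complex.exp ((Complex.I * (k:ℂ)) * (x:ℂ)))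
        = r x * (v₁ x * Complex.exp ((-(Complex.I * (k:ℂ))) * (x:ℂ)))
          + Complex.I * (k:ℂ) * (v₂ x * Complex.exp ((Complex.I * (k:ℂ)) * (x:ℂ))) := by
      rw [hb_def]
      linear_combination (r x * v₁ x) * hexpB
    exact hD ▸ hder
  · refine Tendsto.congr (fun x => ?_) hu₁lim
    rw [mul_assoc, ← Complex.exp_add,
      show (-(Complex.I * (k:ℂ))) * (x:ℂ) + Complex.I * (k:ℂ) * (x:ℂ) = 0 by ring,
      Complex.exp_zero, mul_one]
  · refine squeeze_zero_norm (fun x => ?_) (tendsto_zero_iff_norm_tendsto_zero.1 hu₂lim)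
    exact le_of_eq (by
      rw [norm_mul, norm_mul, hEnorm _ hre1 x]; ring)
  · refine squeeze_zero_norm (fun x => ?_) (tendsto_zero_iff_norm_tendsto_zero.1 hv₁lim)
    exact le_of_eq (by
      rw [norm_mul, norm_mul, hEnorm _ hre2 x, hEnorm _ hre5 x]; ring)
  · refine Tendsto.congr (fun x => ?_) hv₂lim
    rw [mul_assoc, ← Complex.exp_add,
      show (Complex.I * (k:ℂ)) * (x:ℂ) + -Complex.I * (k:ℂ) * (x:ℂ) = 0 by ring,
      Complex.exp_zero, mul_one]
end

section
/- Define d : ℝ → ℝ by d(x) = e^{8x} − 2(8x² + 8x + 3)e^{4x} + 1. Let k ∈ ℂ with k ≠ −i, and define N(x; k) = (N₁(x; k), N₂(x; k)) by N₁(x; k) = 4i·e^{2x}·((2(k+i)x + i)e^{4x} + 2(k−i)x + 2k − i)/((k+i)²·d(x)) and N₂(x; k) = 1 + 4i·(−(8(k+i)x² + 4(k+2i)x + k + 2i)e^{4x} − k)/((k+i)²·d(x)) (defined for x with d(x) ≠ 0). Then N(x; k) → (0, 1) as x → +∞, and if in addition k ≠ i then N(x; k) → (0, (k−i)²/(k+i)²)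 as x → −∞. -/
set_option autoImplicit false

open Filter

/-- `d(x) = e^{8x} − 2(8x² + 8x + 3)e^{4x} + 1`. -/
noncomputable def negatonD (x : ℝ) : ℝ :=
  Real.exp (8 * x) - 2 * (8 * x ^ 2 + 8 * x + 3) * Real.exp (4 * x) + 1

/-- First component of `N(x;k)`. -/
noncomputable def negatonN₁ (k : ℂ) (x : ℝ) : ℂ :=
  4 * Complex.I * (Real.exp (2 * x) : ℂ) *
      ((2 * (k + Complex.I) * (x : ℂ) + Complex.I) * (Real.exp (4 * x) : ℂ)
        + 2 * (k - Complex.I) * (x : ℂ) + 2 * k - Complex.I) /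
    ((k + Complex.I) ^ 2 * (negatonD x : ℂ))

/-- Second component of `N(x;k)`. -/
noncomputable def negatonN₂ (k : ℂ) (x : ℝ) : ℂ :=
  1 + 4 * Complex.I *
      (-(8 * (k + Complex.I) * (x : ℂ) ^ 2 + 4 * (k + 2 * Complex.I) * (x : ℂ)
          + k + 2 * Complex.I) * (Real.exp (4 * x) : ℂ) - k) /
    ((k + Complex.I) ^ 2 * (negatonD x : ℂ))

local notation "𝕚" => Complex.I

lemma negaton_aux_real_atTop (n : ℕ) (c : ℝ) (hc : c < 0) :
    Tendsto (fun x : ℝ => x ^ n * Real.exp (c * x)) atTop (nhds 0) := by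
  have h := Real.tendsto_pow_mul_exp_neg_atTop_nhds_zero n
  have hmul : Tendsto (fun x : ℝ => -c * x) atTop atTop :=
    tendsto_id.const_mul_atTop (neg_pos.2 hc)
  have h2 := (h.comp hmul).const_mul (((-c) ^ n)⁻¹)
  simp only [mul_zero] at h2
  refine h2.congr fun x => ?_
  have hcn : ((-c) ^ n) ≠ 0 := pow_ne_zero _ (by linarith)
  simp only [Function.comp]
  rw [mul_pow, show -(-c * x) = c * x by ring]
  field_simp

lemma negaton_aux_real_atBot (n : ℕ) (c : ℝ) (hc : 0 < c) :
    Tendsto (fun x : ℝ => x ^ n * Real.exp (c * x)) atBot (nhds 0) := by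
  have h := (negaton_aux_real_atTop n (-c) (by linarith)).comp tendsto_neg_atBot_atTop
  have h2 := h.const_mul ((-1 : ℝ) ^ n)
  simp only [mul_zero] at h2
  refine h2.congr fun x => ?_
  simp only [Function.comp]
  rw [← mul_assoc, ← mul_pow]
  ring_nf

lemma negaton_aux_atTop (n : ℕ) (c : ℝ) (hc : c < 0) :
    Tendsto (fun x : ℝ => (x : ℂ) ^ n * (Real.exp (c * x) : ℂ)) atTop (nhds 0) := by
  have h := (Complex.continuous_ofReal.tendsto 0).comp (negaton_aux_real_atTop n c hc)
  simp only [Complex.ofReal_zero] at h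
  exact h.congr fun x => by push_cast [Function.comp]; ring

lemma negaton_aux_atBot (n : ℕ) (c : ℝ) (hc : 0 < c) :
    Tendsto (fun x : ℝ => (x : ℂ) ^ n * (Real.exp (c * x) : ℂ)) atBot (nhds 0) := by
  have h := (Complex.continuous_ofReal.tendsto 0).comp (negaton_aux_real_atBot n c hc)
  simp only [Complex.ofReal_zero] at h
  exact h.congr fun x => by push_cast [Function.comp]; ring

/-- `N(x;k) → (0, 1)` as `x → +∞`, and, if additionally `k ≠ i`,
`N(x;k) → (0, (k−i)²/(k+i)²)` as `x → −∞`. -/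
theorem negaton_N_limits
    (k : ℂ) (hk : k ≠ -Complex.I) :
    (Tendsto (fun x : ℝ => negatonN₁ k x) atTop (nhds 0) ∧
     Tendsto (fun x : ℝ => negatonN₂ k x) atTop (nhds 1)) ∧
    (k ≠ Complex.I →
      Tendsto (fun x : ℝ => negatonN₁ k x) atBot (nhds 0) ∧
      Tendsto (fun x : ℝ => negatonN₂ k x) atBot
        (nhds ((k - Complex.I) ^ 2 / (k + Complex.I) ^ 2))) := by
  have hki : k + 𝕚 ≠ 0 := fun h => hk (eq_neg_of_add_eq_zero_left h)
  have hki2 : (k + 𝕚) ^ 2 ≠ 0 := pow_ne_zero _ hki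
  -- the rewritten (multiplied by e^{-8x}) forms, used at +∞
  have key₁ : ∀ x : ℝ, negatonN₁ k x =
      (4 * 𝕚 * ((2 * (k + 𝕚) * (x : ℂ) + 𝕚) * (Real.exp (-2 * x) : ℂ)
        + (2 * (k - 𝕚) * (x : ℂ) + 2 * k - 𝕚) * (Real.exp (-6 * x) : ℂ))) /
      ((k + 𝕚) ^ 2 * (1 - 2 * (8 * (x : ℂ) ^ 2 + 8 * (x : ℂ) + 3) * (Real.exp (-4 * x) : ℂ)
        + (Real.exp (-8 * x) : ℂ))) := by
    intro x
    have ht : ((Real.exp (-8 * x) : ℝ) : ℂ) ≠ 0 := by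
      exact_mod_cast (Real.exp_pos (-8 * x)).ne'
    have E1 : ((Real.exp (8 * x) : ℝ) : ℂ) * ((Real.exp (-8 * x) : ℝ) : ℂ) = 1 := by
      rw [← Complex.ofReal_mul, ← Real.exp_add, show (8:ℝ) * x + -8 * x = 0 by ring,
        Real.exp_zero, Complex.ofReal_one]
    have E2 : ((Real.exp (4 * x) : ℝ) : ℂ) * ((Real.exp (-8 * x) : ℝ) : ℂ)
        = ((Real.exp (-4 * x) : ℝ) : ℂ) := by
      rw [← Complex.ofReal_mul, ← Real.exp_add, show (4:ℝ) * x + -8 * x = -4 * x by ring]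
    have E3 : ((Real.exp (2 * x) : ℝ) : ℂ) * ((Real.exp (4 * x) : ℝ) : ℂ)
        * ((Real.exp (-8 * x) : ℝ) : ℂ) = ((Real.exp (-2 * x) : ℝ) : ℂ) := by
      rw [← Complex.ofReal_mul, ← Complex.ofReal_mul, ← Real.exp_add, ← Real.exp_add,
        show (2:ℝ) * x + 4 * x + -8 * x = -2 * x by ring]
    have E4 : ((Real.exp (2 * x) : ℝ) : ℂ) * ((Real.exp (-8 * x) : ℝ) : ℂ)
        = ((Real.exp (-6 * x) : ℝ) : ℂ) := by
      rw [← Complex.ofReal_mul, ← Real.exp_add, show (2:ℝ) * x + -8 * x = -6 * x by ring]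
    rw [negatonN₁, negatonD, ← mul_div_mul_right _ _ ht]
    congr 1
    · linear_combination (4 * 𝕚 * (2 * (k + 𝕚) * (x : ℂ) + 𝕚)) * E3
        + (4 * 𝕚 * (2 * (k - 𝕚) * (x : ℂ) + 2 * k - 𝕚)) * E4
    · linear_combination (norm := (push_cast; ring1)) ((k + 𝕚) ^ 2) * E1
        - (2 * (8 * (x : ℂ) ^ 2 + 8 * (x : ℂ) + 3) * (k + 𝕚) ^ 2) * E2
  have key₂ : ∀ x : ℝ, negatonN₂ k x =
      1 + (4 * 𝕚 * (-(8 * (k + 𝕚) * (x : ℂ) ^ 2 + 4 * (k + 2 * 𝕚) * (x : ℂ)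
          + k + 2 * 𝕚) * (Real.exp (-4 * x) : ℂ) - k * (Real.exp (-8 * x) : ℂ))) /
      ((k + 𝕚) ^ 2 * (1 - 2 * (8 * (x : ℂ) ^ 2 + 8 * (x : ℂ) + 3) * (Real.exp (-4 * x) : ℂ)
        + (Real.exp (-8 * x) : ℂ))) := by
    intro x
    have ht : ((Real.exp (-8 * x) : ℝ) : ℂ) ≠ 0 := by
      exact_mod_cast (Real.exp_pos (-8 * x)).ne'
    have E1 : ((Real.exp (8 * x) : ℝ) : ℂ) * ((Real.exp (-8 * x) : ℝ) : ℂ) = 1 := by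
      rw [← Complex.ofReal_mul, ← Real.exp_add, show (8:ℝ) * x + -8 * x = 0 by ring,
        Real.exp_zero, Complex.ofReal_one]
    have E2 : ((Real.exp (4 * x) : ℝ) : ℂ) * ((Real.exp (-8 * x) : ℝ) : ℂ)
        = ((Real.exp (-4 * x) : ℝ) : ℂ) := by
      rw [← Complex.ofReal_mul, ← Real.exp_add, show (4:ℝ) * x + -8 * x = -4 * x by ring]
    rw [negatonN₂, negatonD]
    congr 1
    rw [← mul_div_mul_right _ _ ht]
    congr 1
    · linear_combination (-(4 * 𝕚) * (8 * (k + 𝕚) * (x : ℂ) ^ 2 + 4 * (k + 2 * 𝕚) * (x : ℂ)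
          + k + 2 * 𝕚)) * E2
    · linear_combination (norm := (push_cast; ring1)) ((k + 𝕚) ^ 2) * E1
        - (2 * (8 * (x : ℂ) ^ 2 + 8 * (x : ℂ) + 3) * (k + 𝕚) ^ 2) * E2
  -- denominator limit at +∞ after the rewrite
  have hden_top : Tendsto (fun x : ℝ => (k + 𝕚) ^ 2 *
      (1 - 2 * (8 * (x : ℂ) ^ 2 + 8 * (x : ℂ) + 3) * (Real.exp (-4 * x) : ℂ)
        + (Real.exp (-8 * x) : ℂ))) atTop (nhds ((k + 𝕚) ^ 2)) := by
    have h2 := negaton_aux_atTop 2 (-4) (by norm_num)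
    have h1 := negaton_aux_atTop 1 (-4) (by norm_num)
    have h0 := negaton_aux_atTop 0 (-4) (by norm_num)
    have h8 := negaton_aux_atTop 0 (-8) (by norm_num)
    have hin := (((tendsto_const_nhds :
        Tendsto (fun _ : ℝ => (1 : ℂ)) atTop (nhds 1)).sub
      (((h2.const_mul 16).add ((h1.const_mul 16).add (h0.const_mul 6))))).add h8)
    have hin' : Tendsto (fun x : ℝ =>
        1 - 2 * (8 * (x : ℂ) ^ 2 + 8 * (x : ℂ) + 3) * (Real.exp (-4 * x) : ℂ)
          + (Real.exp (-8 * x) : ℂ)) atTop (nhds 1) := by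
      refine Tendsto.congr (fun x => ?_) (by simpa using hin)
      push_cast
      ring
    simpa using hin'.const_mul ((k + 𝕚) ^ 2)
  constructor
  · constructor
    · -- N₁ at +∞
      have h1 := negaton_aux_atTop 1 (-2) (by norm_num)
      have h0 := negaton_aux_atTop 0 (-2) (by norm_num)
      have h1' := negaton_aux_atTop 1 (-6) (by norm_num)
      have h0' := negaton_aux_atTop 0 (-6) (by norm_num)
      have hnum : Tendsto (fun x : ℝ => 4 * 𝕚 *
          ((2 * (k + 𝕚) * (x : ℂ) + 𝕚) * (Real.exp (-2 * x) : ℂ)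
            + (2 * (k - 𝕚) * (x : ℂ) + 2 * k - 𝕚) * (Real.exp (-6 * x) : ℂ)))
          atTop (nhds 0) := by
        have hc := ((h1.const_mul (8 * 𝕚 * (k + 𝕚))).add (h0.const_mul (4 * 𝕚 * 𝕚))).add
          ((h1'.const_mul (8 * 𝕚 * (k - 𝕚))).add (h0'.const_mul (4 * 𝕚 * (2 * k - 𝕚))))
        refine Tendsto.congr (fun x => ?_) (by simpa using hc)
        push_cast
        ring
      have hdiv := hnum.div hden_top hki2
      rw [zero_div] at hdiv
      exact hdiv.congr fun x => (key₁ x).symm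
    · -- N₂ at +∞
      have h2 := negaton_aux_atTop 2 (-4) (by norm_num)
      have h1 := negaton_aux_atTop 1 (-4) (by norm_num)
      have h0 := negaton_aux_atTop 0 (-4) (by norm_num)
      have h8 := negaton_aux_atTop 0 (-8) (by norm_num)
      have hnum : Tendsto (fun x : ℝ => 4 * 𝕚 *
          (-(8 * (k + 𝕚) * (x : ℂ) ^ 2 + 4 * (k + 2 * 𝕚) * (x : ℂ)
            + k + 2 * 𝕚) * (Real.exp (-4 * x) : ℂ) - k * (Real.exp (-8 * x) : ℂ)))
          atTop (nhds 0) := by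
        have hc := (((h2.const_mul (-(32 * 𝕚 * (k + 𝕚)))).add
          ((h1.const_mul (-(16 * 𝕚 * (k + 2 * 𝕚)))).add
            (h0.const_mul (-(4 * 𝕚 * (k + 2 * 𝕚)))))).add (h8.const_mul (-(4 * 𝕚 * k))))
        refine Tendsto.congr (fun x => ?_) (by simpa using hc)
        push_cast
        ring
      have hdiv := hnum.div hden_top hki2
      rw [zero_div] at hdiv
      have hsum := (tendsto_const_nhds :
        Tendsto (fun _ : ℝ => (1 : ℂ)) atTop (nhds 1)).add hdiv
      rw [add_zero] at hsum
      exact hsum.congr fun x => (key₂ x).symm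
  · intro _
    -- denominator limit at -∞
    have hden_bot : Tendsto (fun x : ℝ => (k + 𝕚) ^ 2 * ((negatonD x : ℝ) : ℂ))
        atBot (nhds ((k + 𝕚) ^ 2)) := by
      have h8 := negaton_aux_atBot 0 8 (by norm_num)
      have h2 := negaton_aux_atBot 2 4 (by norm_num)
      have h1 := negaton_aux_atBot 1 4 (by norm_num)
      have h0 := negaton_aux_atBot 0 4 (by norm_num)
      have hc := ((h8.sub ((h2.const_mul 16).add ((h1.const_mul 16).add
        (h0.const_mul 6)))).add (tendsto_const_nhds :
          Tendsto (fun _ : ℝ => (1 : ℂ)) atBot (nhds 1)))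
      have hD : Tendsto (fun x : ℝ => ((negatonD x : ℝ) : ℂ)) atBot (nhds 1) := by
        refine Tendsto.congr (fun x => ?_) (by simpa using hc)
        simp only [negatonD]
        push_cast
        ring
      simpa using hD.const_mul ((k + 𝕚) ^ 2)
    constructor
    · -- N₁ at -∞
      have h16 := negaton_aux_atBot 1 6 (by norm_num)
      have h06 := negaton_aux_atBot 0 6 (by norm_num)
      have h12 := negaton_aux_atBot 1 2 (by norm_num)
      have h02 := negaton_aux_atBot 0 2 (by norm_num)
      have hnum : Tendsto (fun x : ℝ => 4 * 𝕚 * (Real.exp (2 * x) : ℂ) *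
          ((2 * (k + 𝕚) * (x : ℂ) + 𝕚) * (Real.exp (4 * x) : ℂ)
            + 2 * (k - 𝕚) * (x : ℂ) + 2 * k - 𝕚)) atBot (nhds 0) := by
        have hc := ((h16.const_mul (8 * 𝕚 * (k + 𝕚))).add (h06.const_mul (4 * 𝕚 * 𝕚))).add
          ((h12.const_mul (8 * 𝕚 * (k - 𝕚))).add (h02.const_mul (4 * 𝕚 * (2 * k - 𝕚))))
        refine Tendsto.congr (fun x => ?_) (by simpa using hc)
        have E6 : ((Real.exp (2 * x) : ℝ) : ℂ) * ((Real.exp (4 * x) : ℝ) : ℂ)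
            = ((Real.exp (6 * x) : ℝ) : ℂ) := by
          rw [← Complex.ofReal_mul, ← Real.exp_add, show (2:ℝ) * x + 4 * x = 6 * x by ring]
        linear_combination (norm := (push_cast; ring1)) (-(4 * 𝕚) * (2 * (k + 𝕚) * (x : ℂ) + 𝕚)) * E6
      have hdiv := hnum.div hden_bot hki2
      rw [zero_div] at hdiv
      exact hdiv.congr fun x => rfl
    · -- N₂ at -∞
      have h2 := negaton_aux_atBot 2 4 (by norm_num)
      have h1 := negaton_aux_atBot 1 4 (by norm_num)
      have h0 := negaton_aux_atBot 0 4 (by norm_num)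
      have hnum : Tendsto (fun x : ℝ => 4 * 𝕚 *
          (-(8 * (k + 𝕚) * (x : ℂ) ^ 2 + 4 * (k + 2 * 𝕚) * (x : ℂ)
            + k + 2 * 𝕚) * (Real.exp (4 * x) : ℂ) - k)) atBot (nhds (-(4 * 𝕚 * k))) := by
        have hc := (((h2.const_mul (-(32 * 𝕚 * (k + 𝕚)))).add
          ((h1.const_mul (-(16 * 𝕚 * (k + 2 * 𝕚)))).add
            (h0.const_mul (-(4 * 𝕚 * (k + 2 * 𝕚)))))).add (tendsto_const_nhds :
              Tendsto (fun _ : ℝ => -(4 * 𝕚 * k)) atBot (nhds (-(4 * 𝕚 * k)))))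
        refine Tendsto.congr (fun x => ?_) (by simpa using hc)
        push_cast
        ring
      have hdiv := (tendsto_const_nhds :
        Tendsto (fun _ : ℝ => (1 : ℂ)) atBot (nhds 1)).add (hnum.div hden_bot hki2)
      have hval : (1 : ℂ) + -(4 * 𝕚 * k) / (k + 𝕚) ^ 2 = (k - 𝕚) ^ 2 / (k + 𝕚) ^ 2 := by
        field_simp
        ring
      rw [← hval]
      exact hdiv.congr fun x => rfl
end
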